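/- Let L be a number field with ring of integers O_L and let t ∈ O_L be nonzero and not a unit. Then for all but finitely many prime numbers k, the polynomial T^k − t is irreducible over L(e^{2πi/k}). -/

import Mathlib

/-!
Since `t` is a nonzero nonunit, some prime `p` has `v := v_p(N_{L/ℚ}(t)) ≠ 0`. If `b ^ k = t` in
a cyclotomic extension `M = L(ζ_k)`, taking norms to `ℚ` gives `k · v_p(N(b)) = [M : L] · v`. As
`[M : L] ≤ φ(k) < k`, the prime `k` must divide `v`, which excludes only finitely many `k`; for the
others `T ^ k - t` has no root in `M`, hence is irreducible there.
-/

open NumberField Polynomial Module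

theorem IsCyclotomicExtension.finrank_le_totient (n : ℕ) [NeZero n] (K L : Type*) [Field K]
    [Field L] [Algebra K L] [IsCyclotomicExtension {n} K L] :
    Module.finrank K L ≤ n.totient := by
  have hζ := zeta_spec n K L
  rw [(hζ.powerBasis K).finrank, hζ.powerBasis_dim K, ← natDegree_cyclotomic n K]
  refine natDegree_le_of_dvd (minpoly.dvd K _ ?_) (cyclotomic_ne_zero n K)
  simpa [aeval_def, eval₂_eq_eval_map, map_cyclotomic] using
    hζ.isRoot_cyclotomic (Nat.pos_of_ne_zero (NeZero.ne n))

theorem NumberField.RingOfIntegers.isUnit_iff_isUnit_norm_int {K : Type*} [Field K] [NumberField K]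
    {x : 𝓞 K} : IsUnit x ↔ IsUnit (Algebra.norm ℤ x) := by
  rw [NumberField.isUnit_iff_norm, RingOfIntegers.coe_norm, ← Algebra.coe_norm_int,
    Int.isUnit_iff_abs_eq]
  exact_mod_cast Iff.rfl

theorem NumberField.RingOfIntegers.exists_padicValRat_norm_ne_zero {K : Type*} [Field K]
    [NumberField K] {x : 𝓞 K} (hx : x ≠ 0) (hxu : ¬IsUnit x) :
    ∃ p : ℕ, p.Prime ∧ padicValRat p (Algebra.norm ℚ (x : K)) ≠ 0 := by
  have hn : Algebra.norm ℤ x ≠ 0 := Algebra.norm_ne_zero_iff.mpr hx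
  have hnu : (Algebra.norm ℤ x).natAbs ≠ 1 := fun h =>
    hxu (isUnit_iff_isUnit_norm_int.mpr (Int.isUnit_iff_natAbs_eq.mpr h))
  obtain ⟨p, hp, hpn⟩ := Nat.exists_prime_and_dvd hnu
  refine ⟨p, hp, ?_⟩
  rw [← Algebra.coe_norm_int, padicValRat.of_int, Nat.cast_ne_zero, Ne, padicValInt.eq_zero_iff,
    not_or, not_or, not_not]
  exact ⟨hp.ne_one, hn, Int.natCast_dvd.mpr hpn⟩

theorem padicValRat_norm_of_pow_eq_algebraMap {L M : Type*} [Field L] [Field M] [Algebra ℚ L]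
    [Algebra ℚ M] [Algebra L M] [IsScalarTower ℚ L M] (p : ℕ) [Fact p.Prime] {k : ℕ} {b : M}
    {s : L} (h : b ^ k = algebraMap L M s) :
    k * padicValRat p (Algebra.norm ℚ b) = finrank L M * padicValRat p (Algebra.norm ℚ s) := by
  rw [← padicValRat.pow, ← padicValRat.pow, ← map_pow, h, ← Algebra.norm_norm (S := L),
    Algebra.norm_algebraMap, map_pow]

theorem irreducible_X_pow_sub_C_of_not_dvd_padicValRat_norm {L M : Type*} [Field L] [Field M]
    [Algebra ℚ L] [Algebra ℚ M] [Algebra L M] [IsScalarTower ℚ L M] [FiniteDimensional L M]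
    (p : ℕ) [Fact p.Prime] {k : ℕ} (hk : k.Prime) (hkM : finrank L M < k) {s : L}
    (hks : ¬(k : ℤ) ∣ padicValRat p (Algebra.norm ℚ s)) :
    Irreducible (X ^ k - C (algebraMap L M s)) := by
  refine X_pow_sub_C_irreducible_of_prime hk fun b hb => ?_
  have hdvd : (k : ℤ) ∣ finrank L M * padicValRat p (Algebra.norm ℚ s) :=
    ⟨_, (padicValRat_norm_of_pow_eq_algebraMap p hb).symm⟩
  rcases (Nat.prime_iff_prime_int.mp hk).dvd_or_dvd hdvd with hkM' | hks'
  · exact (Nat.le_of_dvd finrank_pos (Int.natCast_dvd_natCast.mp hkM')).not_gt hkM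
  · exact hks hks'

theorem cofinitely_many_primes_irreducible_over_cyclotomic
    (L : Type) [Field L] [NumberField L]
    (t : 𝓞 L) (ht : t ≠ 0) (htu : ¬ IsUnit t) :
    ∃ S : Finset ℕ, ∀ (k : ℕ) (hk : k.Prime), k ∉ S →
      ∀ (M : Type) [Field M] [Algebra L M] [IsCyclotomicExtension {k} L M],
        Irreducible ((X ^ k - C (algebraMap (𝓞 L) L t)).map (algebraMap L M)) := by
  obtain ⟨p, hp, hv⟩ := RingOfIntegers.exists_padicValRat_norm_ne_zero ht htu
  have : Fact p.Prime := ⟨hp⟩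
  refine ⟨(padicValRat p (Algebra.norm ℚ (t : L))).natAbs.primeFactors, fun k hk hkS M _ _ _ => ?_⟩
  have : NeZero k := ⟨hk.ne_zero⟩
  have : NumberField M := IsCyclotomicExtension.numberField {k} L M
  rw [Polynomial.map_sub, Polynomial.map_pow, map_X, map_C]
  refine irreducible_X_pow_sub_C_of_not_dvd_padicValRat_norm p hk
    ((IsCyclotomicExtension.finrank_le_totient k L M).trans_lt (Nat.totient_lt k hk.one_lt)) ?_
  rw [Int.natCast_dvd]
  exact fun hdvd => hkS (Nat.mem_primeFactors.mpr ⟨hk, hdvd, Int.natAbs_ne_zero.mpr hv⟩)
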